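/- Let p be prime, S ⊆ Z/pZ, and let V ⊆ (Z/pZ)^ℓ be a family closed under scalar multiplication by nonzero elements. Suppose V can be partitioned into K disjoint S-covering subfamilies V₁,...,V_K, each of size at least N. Then for every integer m ≥ 1 and every nonzero a ∈ Z/pZ, there exists an (aS ∪ S)-covering family V' ⊆ V^{m-1} (vectors of length (m-1)ℓ formed by concatenating m-1 elements of V) of size at least N^m / |V|. -/

import Mathlib

/-!
Call a tuple `(w₀, …, w_{m-1})` of vectors of `V` a chain if `w₀` lies in a fixed part and each
`w_{j+1}` lies in the part of `a⁻¹ • w_j`. Every vector of `V` has at least `N` possible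
successors, so there are at least `N ^ m` chains, and at least `N ^ m / |V|` of them share their
last entry; drop that entry. Where two distinct such chains first differ, the predecessors agree,
so both entries lie in a common part, which yields every difference in `S`. At the last entry `j`
where they differ, `w_{j+1}` is shared, so by disjointness of the parts `a⁻¹ • w_j` and
`a⁻¹ • w'_j` lie in a common part, which yields every difference in `a • S`.
-/

open Finset Function

section Chains

variable {α : Type*}

open Classical in
noncomputable def chains (Q V : Finset α) (r : α → α → Prop) (n : ℕ) :
    Finset (Fin (n + 1) → α) :=
  {w ∈ Fintype.piFinset fun _ => V | w 0 ∈ Q ∧ ∀ j : Fin n, r (w j.castSucc) (w j.succ)}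

variable {Q V : Finset α} {r : α → α → Prop} {n : ℕ} {w : Fin (n + 1) → α}

theorem mem_chains :
    w ∈ chains Q V r n ↔ (∀ j, w j ∈ V) ∧ w 0 ∈ Q ∧ ∀ j : Fin n, r (w j.castSucc) (w j.succ) := by
  simp only [chains, mem_filter, Fintype.mem_piFinset]

theorem snoc_mem_chains {y : α} (hw : w ∈ chains Q V r n) (hy : y ∈ V)
    (hr : r (w (Fin.last n)) y) :
    (Fin.snoc w y : Fin (n + 2) → α) ∈ chains Q V r (n + 1) := by
  obtain ⟨hwV, hw0, hwr⟩ := mem_chains.1 hw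
  refine mem_chains.2 ⟨fun j => ?_, by simpa using hw0, fun j => ?_⟩
  · cases j using Fin.lastCases with
    | last => simpa using hy
    | cast j => simpa using hwV j
  · cases j using Fin.lastCases with
    | last => simpa using hr
    | cast j => rw [Fin.succ_castSucc, Fin.snoc_castSucc, Fin.snoc_castSucc]; exact hwr j

theorem pow_le_card_chains {N : ℕ} (hQ : Q ⊆ V) (hQN : N ≤ #Q)
    (hr : ∀ x ∈ V, ∃ U ⊆ V, N ≤ #U ∧ ∀ y ∈ U, r x y) :
    N ^ (n + 1) ≤ #(chains Q V r n) := by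
  induction n with
  | zero =>
    calc N ^ 1 ≤ #Q := by simpa using hQN
      _ ≤ _ := card_le_card_of_injOn (fun x _ => x)
          (fun x hx => mem_chains.2 ⟨fun _ => hQ hx, hx, Fin.elim0⟩) fun x _ y _ h => congrFun h 0
  | succ n ih =>
    choose! U hUV hUN hUr using hr
    let extensions := (chains Q V r n).sigma fun w => U (w (Fin.last n))
    let extend : (_ : Fin (n + 1) → α) × α → Fin (n + 2) → α := fun x => Fin.snoc x.1 x.2
    have hmaps : Set.MapsTo extend extensions (chains Q V r (n + 1)) := by
      intro x hx
      obtain ⟨hw, hy⟩ := mem_sigma.1 hx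
      have hlast := (mem_chains.1 hw).1 (Fin.last n)
      exact snoc_mem_chains hw (hUV _ hlast hy) (hUr _ hlast _ hy)
    have hinj : Set.InjOn extend extensions := by
      intro x _ x' _ h
      obtain ⟨h1, h2⟩ := Fin.snoc_injective2 h
      exact Sigma.ext h1 (heq_of_eq h2)
    calc N ^ (n + 1 + 1) = N ^ (n + 1) * N := pow_succ _ _
      _ ≤ #(chains Q V r n) * N := Nat.mul_le_mul_right _ ih
      _ = ∑ _w ∈ chains Q V r n, N := by rw [sum_const, smul_eq_mul]
      _ ≤ ∑ w ∈ chains Q V r n, #(U (w (Fin.last n))) :=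
          sum_le_sum fun w hw => hUN _ ((mem_chains.1 hw).1 _)
      _ = #extensions := (card_sigma _ _).symm
      _ ≤ _ := card_le_card_of_injOn _ hmaps hinj

end Chains

theorem Finset.exists_card_le_mul_card_fiber {α β : Type*} [DecidableEq β] [Nonempty β]
    {s : Finset α} {t : Finset β} {f : α → β} (hf : Set.MapsTo f s t) :
    ∃ y, #s ≤ #t * #{x ∈ s | f x = y} := by
  obtain rfl | ⟨x, hx⟩ := s.eq_empty_or_nonempty
  · simp
  obtain ⟨y, -, hy⟩ := exists_le_of_sum_le (s := t) (f := fun _ => #s)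
    (g := fun y => #t * #{x ∈ s | f x = y}) ⟨f x, hf hx⟩ <| by
      rw [sum_const, smul_eq_mul, ← mul_sum, ← card_eq_sum_card_fiberwise hf]
  exact ⟨y, hy⟩

theorem Fin.injOn_init_of_last_eq {α : Type*} {n : ℕ} (v : α) :
    Set.InjOn (Fin.init : (Fin (n + 1) → α) → Fin n → α) {w | w (Fin.last n) = v} := by
  intro w hw w' hw' h
  have hlast : w (Fin.last n) = w' (Fin.last n) := hw.trans hw'.symm
  rw [← Fin.snoc_init_self w, ← Fin.snoc_init_self w', h, hlast]

section SamePart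

variable {κ α : Type*}

def SamePart (P : κ → Finset α) (x y : α) : Prop :=
  ∃ k, x ∈ P k ∧ y ∈ P k

variable {P : κ → Finset α} {x y z : α}

theorem SamePart.symm (h : SamePart P x y) : SamePart P y x :=
  let ⟨k, hx, hy⟩ := h; ⟨k, hy, hx⟩

theorem SamePart.trans (hP : Pairwise (Disjoint on P)) (hxy : SamePart P x y)
    (hyz : SamePart P y z) : SamePart P x z := by
  obtain ⟨k, hx, hy⟩ := hxy
  obtain ⟨k', hy', hz⟩ := hyz
  obtain rfl : k = k' := by
    by_contra hne
    exact disjoint_left.1 (hP hne) hy hy'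
  exact ⟨k, hx, hz⟩

end SamePart

section Covering

variable {R ι κ : Type*}

def IsCovering [Sub R] (T : Set R) (U : Finset (ι → R)) : Prop :=
  ∀ u ∈ U, ∀ u' ∈ U, u ≠ u' → ∀ t ∈ T, ∃ i, u i - u' i = t

theorem SamePart.exists_sub_eq [Sub R] {P : κ → Finset (ι → R)} {u u' : ι → R} {T : Set R}
    {t : R} (hcov : ∀ k, IsCovering T (P k)) (h : SamePart P u u') (hne : u ≠ u') (ht : t ∈ T) :
    ∃ i, u i - u' i = t :=
  let ⟨k, hu, hu'⟩ := h; hcov k u hu u' hu' hne t ht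

variable [Field R] {P : κ → Finset (ι → R)} {k₀ : κ} {V : Finset (ι → R)} {a : R} {S : Set R}
  {n : ℕ} {w w' : Fin (n + 1) → ι → R}

theorem exists_sub_eq_of_mem_chains (hP : Pairwise (Disjoint on P))
    (hcov : ∀ k, IsCovering S (P k)) (hw : w ∈ chains (P k₀) V (fun x => SamePart P (a⁻¹ • x)) n)
    (hw' : w' ∈ chains (P k₀) V (fun x => SamePart P (a⁻¹ • x)) n)
    (hlast : w (Fin.last n) = w' (Fin.last n)) (hne : w ≠ w') {t : R} (ht : t ∈ S) :
    ∃ j : Fin n, ∃ i, w j.castSucc i - w' j.castSucc i = t := by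
  obtain ⟨j, hj, hmin⟩ := wellFounded_lt.has_min {j | w j ≠ w' j} (Function.ne_iff.1 hne)
  have hsame : SamePart P (w j) (w' j) := by
    obtain ⟨-, hw0, hwr⟩ := mem_chains.1 hw
    obtain ⟨-, hw0', hwr'⟩ := mem_chains.1 hw'
    cases j using Fin.cases with
    | zero => exact ⟨k₀, hw0, hw0'⟩
    | succ i =>
      have hprev : w i.castSucc = w' i.castSucc := by
        by_contra h
        exact hmin _ h Fin.castSucc_lt_succ
      exact (hwr i).symm.trans hP (hprev ▸ hwr' i)
  obtain ⟨k, rfl⟩ := Fin.exists_castSucc_eq.2 fun h : j = Fin.last n => hj (h ▸ hlast)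
  obtain ⟨i, hi⟩ := hsame.exists_sub_eq hcov hj ht
  exact ⟨k, i, hi⟩

theorem exists_sub_eq_mul_of_mem_chains (hP : Pairwise (Disjoint on P))
    (hcov : ∀ k, IsCovering S (P k)) (ha : a ≠ 0)
    (hw : w ∈ chains (P k₀) V (fun x => SamePart P (a⁻¹ • x)) n)
    (hw' : w' ∈ chains (P k₀) V (fun x => SamePart P (a⁻¹ • x)) n)
    (hlast : w (Fin.last n) = w' (Fin.last n)) (hne : w ≠ w') {s : R} (hs : s ∈ S) :
    ∃ j : Fin n, ∃ i, w j.castSucc i - w' j.castSucc i = a * s := by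
  obtain ⟨j, hj, hmax⟩ := wellFounded_gt.has_min {j | w j ≠ w' j} (Function.ne_iff.1 hne)
  obtain ⟨k, rfl⟩ := Fin.exists_castSucc_eq.2 fun h : j = Fin.last n => hj (h ▸ hlast)
  have hnext : w k.succ = w' k.succ := by
    by_contra h
    exact hmax _ h Fin.castSucc_lt_succ
  have hsame : SamePart P (a⁻¹ • w k.castSucc) (a⁻¹ • w' k.castSucc) :=
    ((mem_chains.1 hw).2.2 k).trans hP (hnext ▸ (mem_chains.1 hw').2.2 k).symm
  have hne' : a⁻¹ • w k.castSucc ≠ a⁻¹ • w' k.castSucc :=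
    (smul_right_injective _ (inv_ne_zero ha)).ne hj
  obtain ⟨i, hi⟩ := hsame.exists_sub_eq hcov hne' hs
  refine ⟨k, i, ?_⟩
  rw [Pi.smul_apply, Pi.smul_apply, smul_eq_mul, smul_eq_mul, ← mul_sub] at hi
  rw [← hi, mul_inv_cancel_left₀ ha]

theorem isCovering_image_init (hP : Pairwise (Disjoint on P)) (hcov : ∀ k, IsCovering S (P k))
    (ha : a ≠ 0) [DecidableEq (Fin n × ι → R)] {F : Finset (Fin (n + 1) → ι → R)}
    (hF : F ⊆ chains (P k₀) V (fun x => SamePart P (a⁻¹ • x)) n) {v : ι → R}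
    (hlast : ∀ w ∈ F, w (Fin.last n) = v) :
    IsCovering (S ∪ (a * ·) '' S) (F.image fun w => uncurry (Fin.init w)) := by
  simp only [IsCovering, forall_mem_image]
  intro w hw w' hw' hne t ht
  have hne' : w ≠ w' := by rintro rfl; exact hne rfl
  have hl : w (Fin.last n) = w' (Fin.last n) := (hlast w hw).trans (hlast w' hw').symm
  obtain ⟨j, i, h⟩ : ∃ j : Fin n, ∃ i, w j.castSucc i - w' j.castSucc i = t := by
    rcases ht with ht | ⟨s, hs, rfl⟩
    · exact exists_sub_eq_of_mem_chains hP hcov (hF hw) (hF hw') hl hne' ht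
    · exact exists_sub_eq_mul_of_mem_chains hP hcov ha (hF hw) (hF hw') hl hne' hs
  exact ⟨(j, i), h⟩

end Covering

/-- Alon–Alweiss step: if `V` is closed under nonzero scalar multiplication and is
partitioned into `K ≥ 1` disjoint `S`-covering parts each of size `≥ N`, then for any
`m ≥ 1` and nonzero `a` there is an `(aS ∪ S)`-covering family `V' ⊆ V^(m-1)` of size
at least `N^m / |V|`. -/
theorem stmt13 (p ℓ K N m : ℕ) (hp : p.Prime) (hK : 0 < K) (hm : 1 ≤ m)
    (a : ZMod p) (ha : a ≠ 0) (S : Set (ZMod p))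
    (V : Finset (Fin ℓ → ZMod p))
    (hclosed : ∀ c : ZMod p, c ≠ 0 → ∀ v ∈ V, (fun i => c * v i) ∈ V)
    (P : Fin K → Finset (Fin ℓ → ZMod p))
    (hdisj : ∀ k k' : Fin K, k ≠ k' → Disjoint (P k) (P k'))
    (hunion : Finset.univ.biUnion P = V)
    (hsize : ∀ k, N ≤ (P k).card)
    (hcov : ∀ k, ∀ v ∈ P k, ∀ w ∈ P k, v ≠ w → ∀ t ∈ S, ∃ i, v i - w i = t) :
    ∃ V' : Finset (Fin (m - 1) × Fin ℓ → ZMod p),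
      (∀ u ∈ V', ∀ j : Fin (m - 1), (fun i => u (j, i)) ∈ V) ∧
      N ^ m ≤ V'.card * V.card ∧
      (∀ u ∈ V', ∀ u' ∈ V', u ≠ u' →
        ∀ t ∈ S ∪ (fun x => a * x) '' S, ∃ q, u q - u' q = t) := by
  classical
  have : Fact p.Prime := ⟨hp⟩
  obtain ⟨n, rfl⟩ : ∃ n, m = n + 1 := ⟨m - 1, by omega⟩
  have hPV : ∀ k, P k ⊆ V := fun k => hunion ▸ subset_biUnion_of_mem P (mem_univ k)
  have hsucc : ∀ x ∈ V, ∃ U ⊆ V, N ≤ #U ∧ ∀ y ∈ U, SamePart P (a⁻¹ • x) y := by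
    intro x hx
    obtain ⟨k, -, hk⟩ := mem_biUnion.1 (hunion ▸ hclosed _ (inv_ne_zero ha) x hx)
    exact ⟨P k, hPV k, hsize k, fun y hy => ⟨k, hk, hy⟩⟩
  set W := chains (P ⟨0, hK⟩) V (fun x => SamePart P (a⁻¹ • x)) n
  obtain ⟨v, hv⟩ := exists_card_le_mul_card_fiber (s := W) (t := V) (f := fun w => w (Fin.last n))
    fun w hw => (mem_chains.1 hw).1 _
  set F := {w ∈ W | w (Fin.last n) = v}
  refine ⟨F.image fun w => uncurry (Fin.init w), ?_, ?_, ?_⟩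
  · simp only [forall_mem_image]
    intro w hw j
    exact (mem_chains.1 (mem_filter.1 hw).1).1 j.castSucc
  · have hinj : Set.InjOn (fun w : Fin (n + 1) → Fin ℓ → ZMod p => uncurry (Fin.init w)) F :=
      uncurry_injective.comp_injOn
        ((Fin.injOn_init_of_last_eq v).mono fun w hw => (mem_filter.1 hw).2)
    rw [card_image_of_injOn hinj]
    calc N ^ (n + 1) ≤ #W := pow_le_card_chains (hPV _) (hsize _) hsucc
      _ ≤ #V * #F := hv
      _ = #F * #V := mul_comm _ _
  · exact isCovering_image_init hdisj hcov ha (filter_subset _ W) fun w hw => (mem_filter.1 hw).2
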